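/- Let n_1, …, n_K be integers with each n_j > 2, and let sign_j ∈ {+1, −1} be such that Σ_{j=1}^K sign_j·log N(n_j) = 0 and the relation is non-degenerate, i.e. there is no proper nonempty subset S ⊂ {1, …, K} with Σ_{j∈S} sign_j·log N(n_j) = 0. Then all the numbers n_j² − 4 have the same squarefree kernel: there exist an integer d and positive integers f_1, …, f_K such that n_j² − 4 = d·f_j² for every j (so all the units N(n_j) lie in the same real quadratic field ℚ(√d)). -/

import Mathlib

/-- `N(n) = ((n + √(n²−4))/2)²`, the norm of a hyperbolic class of trace `n`. -/
noncomputable def Nnorm (n : ℕ) : ℝ := (((n : ℝ) + Real.sqrt ((n : ℝ) ^ 2 - 4)) / 2) ^ 2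

/-!
Write `N(n_j) = λ_j²` with `λ_j = (n_j + f_j √d_j) / 2` and `d_j` squarefree. If the `d_j` are
not all equal, some prime `q` divides some `d_j` but not all of them. Let `F` be the field
generated over `ℚ` by `√p` for the other primes `p` dividing the `d_j`. Then `√q ∉ F`, since
for squarefree `m` one has `√m ∈ ℚ(√p : p ∈ P)` only if every prime factor of `m` lies in `P`.
The conjugation `√q ↦ -√q` of `F(√q)` inverts `λ_j` when `q ∣ d_j` and fixes it otherwise.
Applying it to `∏ λ_j ^ sign_j = 1` shows that the subrelation over `{j | q ∣ d_j}` vanishes,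
contradicting non-degeneracy.
-/

open Real Finset

section QuadConj

variable {K S : Type*} [Field K] [SetLike S K] [SubfieldClass S K] {A : S} {s : K}

/-- The graph of the conjugation `a + b s ↦ a - b s` of `A(s)` over `A`; the relation is used
instead of constructing the automorphism itself. -/
def IsQuadConj (A : S) (s x y : K) : Prop :=
  ∃ a ∈ A, ∃ b ∈ A, x = a + b * s ∧ y = a - b * s

theorem eq_and_eq_of_add_mul_eq_add_mul (hs : s ∉ A) {a b a' b' : K} (ha : a ∈ A) (hb : b ∈ A)
    (ha' : a' ∈ A) (hb' : b' ∈ A) (h : a + b * s = a' + b' * s) : a = a' ∧ b = b' := by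
  obtain rfl : b = b' := by
    by_contra hbb
    refine hs ?_
    have : s = (a - a') / (b' - b) := by
      rw [eq_div_iff (sub_ne_zero.mpr (Ne.symm hbb))]
      linear_combination -h
    exact this ▸ div_mem (sub_mem ha ha') (sub_mem hb' hb)
  exact ⟨add_right_cancel h, rfl⟩

namespace IsQuadConj

variable {x y x' y' : K}

theorem of_mem (hx : x ∈ A) : IsQuadConj A s x x :=
  ⟨x, hx, 0, zero_mem A, by ring, by ring⟩

theorem symm (h : IsQuadConj A s x y) : IsQuadConj A s y x := by
  obtain ⟨a, ha, b, hb, rfl, rfl⟩ := h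
  exact ⟨a, ha, -b, neg_mem hb, by ring, by ring⟩

theorem mul (hs : s * s ∈ A) (h : IsQuadConj A s x y) (h' : IsQuadConj A s x' y') :
    IsQuadConj A s (x * x') (y * y') := by
  obtain ⟨a, ha, b, hb, rfl, rfl⟩ := h
  obtain ⟨c, hc, d, hd, rfl, rfl⟩ := h'
  exact ⟨a * c + b * d * (s * s), add_mem (mul_mem ha hc) (mul_mem (mul_mem hb hd) hs),
    a * d + b * c, add_mem (mul_mem ha hd) (mul_mem hb hc), by ring, by ring⟩

theorem prod {ι : Type*} (hs : s * s ∈ A) (t : Finset ι) {f g : ι → K}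
    (h : ∀ i ∈ t, IsQuadConj A s (f i) (g i)) : IsQuadConj A s (∏ i ∈ t, f i) (∏ i ∈ t, g i) := by
  simpa only [Prod.fst_prod, Prod.snd_prod] using
    Finset.prod_induction (fun i => (f i, g i)) (fun z => IsQuadConj A s z.1 z.2)
      (fun _ _ => mul hs) (of_mem (one_mem A)) h

theorem unique (hs : s ∉ A) (h : IsQuadConj A s x y) (h' : IsQuadConj A s x y') : y = y' := by
  obtain ⟨a, ha, b, hb, rfl, rfl⟩ := h
  obtain ⟨a', ha', b', hb', hx, rfl⟩ := h'
  obtain ⟨rfl, rfl⟩ := eq_and_eq_of_add_mul_eq_add_mul hs ha hb ha' hb' hx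
  rfl

end IsQuadConj

end QuadConj

theorem Algebra.mem_adjoin_insert_iff_of_mul_self_mem {R A : Type*} [CommSemiring R]
    [CommSemiring A] [Algebra R A] {T : Set A} {s x : A} (hs : s * s ∈ Algebra.adjoin R T) :
    x ∈ Algebra.adjoin R (insert s T) ↔
      ∃ a ∈ Algebra.adjoin R T, ∃ b ∈ Algebra.adjoin R T, x = a + b * s := by
  constructor
  · intro hx
    induction hx using Algebra.adjoin_induction with
    | mem y hy =>
      rcases hy with rfl | hy
      · exact ⟨0, zero_mem _, 1, one_mem _, by ring⟩
      · exact ⟨y, Algebra.subset_adjoin hy, 0, zero_mem _, by ring⟩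
    | algebraMap r => exact ⟨algebraMap R A r, algebraMap_mem _ r, 0, zero_mem _, by ring⟩
    | add _ _ _ _ ihx ihy =>
      obtain ⟨a, ha, b, hb, rfl⟩ := ihx
      obtain ⟨c, hc, d, hd, rfl⟩ := ihy
      exact ⟨a + c, add_mem ha hc, b + d, add_mem hb hd, by ring⟩
    | mul _ _ _ _ ihx ihy =>
      obtain ⟨a, ha, b, hb, rfl⟩ := ihx
      obtain ⟨c, hc, d, hd, rfl⟩ := ihy
      exact ⟨a * c + b * d * (s * s), add_mem (mul_mem ha hc) (mul_mem (mul_mem hb hd) hs),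
        a * d + b * c, add_mem (mul_mem ha hd) (mul_mem hb hc), by ring⟩
  · rintro ⟨a, ha, b, hb, rfl⟩
    have hT := Algebra.adjoin_mono (R := R) (Set.subset_insert s T)
    exact add_mem (hT ha) (mul_mem (hT hb) (Algebra.subset_adjoin (Set.mem_insert s T)))

noncomputable def adjoinSqrt (P : Finset ℕ) : IntermediateField ℚ ℝ :=
  IntermediateField.adjoin ℚ ((fun p : ℕ => √(p : ℝ)) '' P)

theorem isIntegral_sqrt_natCast (p : ℕ) : IsIntegral ℚ √(p : ℝ) := by
  refine ⟨Polynomial.X ^ 2 - Polynomial.C (p : ℚ), Polynomial.monic_X_pow_sub_C _ two_ne_zero, ?_⟩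
  simp [Real.sq_sqrt (Nat.cast_nonneg p)]

theorem adjoinSqrt_toSubalgebra (P : Finset ℕ) :
    (adjoinSqrt P).toSubalgebra = Algebra.adjoin ℚ ((fun p : ℕ => √(p : ℝ)) '' P) :=
  IntermediateField.adjoin_toSubalgebra_of_isAlgebraic <| by
    rintro _ ⟨p, -, rfl⟩
    exact (isIntegral_sqrt_natCast p).isAlgebraic

theorem sqrt_mem_adjoinSqrt {P : Finset ℕ} {p : ℕ} (hp : p ∈ P) : √(p : ℝ) ∈ adjoinSqrt P :=
  IntermediateField.subset_adjoin ℚ _ ⟨p, hp, rfl⟩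

theorem mem_adjoinSqrt_insert {q : ℕ} {Q : Finset ℕ} {x : ℝ} :
    x ∈ adjoinSqrt (insert q Q) ↔
      ∃ a ∈ adjoinSqrt Q, ∃ b ∈ adjoinSqrt Q, x = a + b * √(q : ℝ) := by
  have hq : √(q : ℝ) * √(q : ℝ) ∈ Algebra.adjoin ℚ ((fun p : ℕ => √(p : ℝ)) '' Q) := by
    rw [mul_self_sqrt (Nat.cast_nonneg q)]
    exact natCast_mem _ q
  rw [← IntermediateField.mem_toSubalgebra, adjoinSqrt_toSubalgebra, coe_insert,
    Set.image_insert_eq, Algebra.mem_adjoin_insert_iff_of_mul_self_mem hq,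
    ← adjoinSqrt_toSubalgebra]
  rfl

theorem sqrt_mem_adjoinSqrt_of_primeFactors_subset {P : Finset ℕ} {m : ℕ} (hm : Squarefree m)
    (h : m.primeFactors ⊆ P) : √(m : ℝ) ∈ adjoinSqrt P := by
  rw [← Nat.prod_primeFactors_of_squarefree hm, Nat.cast_prod,
    Real.sqrt_prod _ fun _ _ => Nat.cast_nonneg _]
  exact prod_mem fun p hp => sqrt_mem_adjoinSqrt (h hp)

theorem eq_one_of_sqrt_mem_adjoinSqrt_empty {m : ℕ} (hm : Squarefree m)
    (h : √(m : ℝ) ∈ adjoinSqrt ∅) : m = 1 := by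
  rw [adjoinSqrt, coe_empty, Set.image_empty, IntermediateField.adjoin_empty,
    IntermediateField.mem_bot] at h
  obtain ⟨r, hr⟩ := h
  obtain ⟨k, rfl⟩ : IsSquare m := by
    by_contra hsq
    exact (irrational_sqrt_natCast_iff.mpr hsq).ne_rat r (by simp [← hr])
  simpa using Nat.isUnit_iff.mp (hm k dvd_rfl)

theorem primeFactors_subset_insert_of_sqrt_mem {q : ℕ} {Q : Finset ℕ} (hq : q.Prime)
    (hqQ : √(q : ℝ) ∉ adjoinSqrt Q)
    (ih : ∀ m : ℕ, Squarefree m → √(m : ℝ) ∈ adjoinSqrt Q → m.primeFactors ⊆ Q)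
    {m : ℕ} (hm : Squarefree m) (h : √(m : ℝ) ∈ adjoinSqrt (insert q Q)) :
    m.primeFactors ⊆ insert q Q := by
  obtain ⟨a, ha, b, hb, hab⟩ := mem_adjoinSqrt_insert.mp h
  have hq0 : (0 : ℝ) < q := by exact_mod_cast hq.pos
  -- comparing the `√q`-coefficients of `m = (a + b √q)²` gives `a b = 0`
  have hsq : (m : ℝ) + 0 * √(q : ℝ) = (a ^ 2 + q * b ^ 2) + (2 * a * b) * √(q : ℝ) := by
    rw [zero_mul, add_zero, ← mul_self_sqrt (Nat.cast_nonneg m), hab]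
    linear_combination b ^ 2 * mul_self_sqrt hq0.le
  obtain ⟨-, hab0⟩ := eq_and_eq_of_add_mul_eq_add_mul hqQ (natCast_mem _ m) (zero_mem _)
    (add_mem (pow_mem ha 2) (mul_mem (natCast_mem _ q) (pow_mem hb 2)))
    (mul_mem (mul_mem (ofNat_mem _ 2) ha) hb) hsq
  rcases mul_eq_zero.mp hab0.symm with h2a | rfl
  · obtain rfl : a = 0 := by simpa using h2a
    rw [zero_add] at hab
    by_cases hqm : q ∣ m
    · obtain ⟨c, rfl⟩ := hqm
      have hc : √(c : ℝ) = b := by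
        refine mul_left_cancel₀ (sqrt_pos.mpr hq0).ne' ?_
        rw [← sqrt_mul hq0.le, ← Nat.cast_mul, hab, mul_comm]
      have hc0 : c ≠ 0 := by rintro rfl; simp at hm
      rw [Nat.primeFactors_mul hq.ne_zero hc0, hq.primeFactors, insert_eq]
      exact union_subset_union subset_rfl
        (ih c (hm.squarefree_of_dvd (dvd_mul_left c q)) (hc ▸ hb))
    · have hmq : √((m * q : ℕ) : ℝ) = b * q := by
        rw [Nat.cast_mul, sqrt_mul (Nat.cast_nonneg m), hab, mul_assoc, mul_self_sqrt hq0.le]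
      have hsub := ih (m * q)
        (Nat.squarefree_mul_iff.mpr ⟨(hq.coprime_iff_not_dvd.mpr hqm).symm, hm, hq.squarefree⟩)
        (hmq ▸ mul_mem hb (natCast_mem _ q))
      refine absurd (sqrt_mem_adjoinSqrt (hsub ?_)) hqQ
      exact Nat.mem_primeFactors.mpr ⟨hq, dvd_mul_left q m, mul_ne_zero hm.ne_zero hq.ne_zero⟩
  · rw [zero_mul, add_zero] at hab
    exact (ih m hm (hab ▸ ha)).trans (subset_insert q Q)

theorem sqrt_mem_adjoinSqrt_iff {P : Finset ℕ} (hP : ∀ p ∈ P, p.Prime) {m : ℕ}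
    (hm : Squarefree m) : √(m : ℝ) ∈ adjoinSqrt P ↔ m.primeFactors ⊆ P := by
  refine ⟨fun h => ?_, sqrt_mem_adjoinSqrt_of_primeFactors_subset hm⟩
  induction P using Finset.induction_on generalizing m with
  | empty => simp [eq_one_of_sqrt_mem_adjoinSqrt_empty hm h]
  | insert q Q hqQ ih =>
    have hQ : ∀ p ∈ Q, p.Prime := fun p hp => hP p (mem_insert_of_mem hp)
    have hq := hP q (mem_insert_self q Q)
    refine primeFactors_subset_insert_of_sqrt_mem hq (fun hq' => hqQ ?_)
      (fun m' hm' => ih hQ hm') hm h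
    simpa [hq.primeFactors] using ih hQ hq.squarefree hq'

theorem sqrt_prime_notMem_adjoinSqrt {P : Finset ℕ} (hP : ∀ p ∈ P, p.Prime) {q : ℕ}
    (hq : q.Prime) (hqP : q ∉ P) : √(q : ℝ) ∉ adjoinSqrt P := fun h =>
  hqP (by simpa [hq.primeFactors] using (sqrt_mem_adjoinSqrt_iff hP hq.squarefree).mp h)

noncomputable def lam (n : ℕ) : ℝ := (n + √((n : ℝ) ^ 2 - 4)) / 2

theorem Nnorm_eq_lam_sq (n : ℕ) : Nnorm n = lam n ^ 2 := rfl

theorem lam_pos {n : ℕ} (hn : 0 < n) : 0 < lam n := by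
  unfold lam
  positivity

theorem lam_inv {n : ℕ} (hn : 2 ≤ n) : (lam n)⁻¹ = (n - √((n : ℝ) ^ 2 - 4)) / 2 := by
  have h4 : (0 : ℝ) ≤ (n : ℝ) ^ 2 - 4 := by
    have : (2 : ℝ) ≤ n := by exact_mod_cast hn
    nlinarith
  refine inv_eq_of_mul_eq_one_right ?_
  rw [lam]
  linear_combination (-1 / 4 : ℝ) * sq_sqrt h4

theorem sqrt_sq_sub_four_eq {n f d : ℕ} (hnfd : (n : ℝ) ^ 2 - 4 = f ^ 2 * d) :
    √((n : ℝ) ^ 2 - 4) = f * √(d : ℝ) := by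
  rw [hnfd, sqrt_mul (sq_nonneg _), sqrt_sq (Nat.cast_nonneg f)]

theorem lam_mem_adjoinSqrt {P : Finset ℕ} {n f d : ℕ} (hd : Squarefree d)
    (hdP : d.primeFactors ⊆ P) (hnfd : (n : ℝ) ^ 2 - 4 = f ^ 2 * d) : lam n ∈ adjoinSqrt P := by
  rw [lam, sqrt_sq_sub_four_eq hnfd]
  exact div_mem (add_mem (natCast_mem _ n)
    (mul_mem (natCast_mem _ f) (sqrt_mem_adjoinSqrt_of_primeFactors_subset hd hdP)))
    (ofNat_mem _ 2)

theorem isQuadConj_lam_inv {Q : Finset ℕ} {q n f d : ℕ} (hq : q.Prime) (hn : 2 ≤ n)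
    (hd : Squarefree d) (hqd : q ∣ d) (hdQ : d.primeFactors ⊆ insert q Q)
    (hnfd : (n : ℝ) ^ 2 - 4 = f ^ 2 * d) :
    IsQuadConj (adjoinSqrt Q) √(q : ℝ) (lam n) (lam n)⁻¹ := by
  obtain ⟨c, rfl⟩ := hqd
  have hc : Squarefree c := hd.squarefree_of_dvd (dvd_mul_left c q)
  have hcQ : c.primeFactors ⊆ Q := by
    intro p hp
    have hpq : p ≠ q := by
      rintro rfl
      exact hq.not_isUnit (hd p (mul_dvd_mul_left p (Nat.dvd_of_mem_primeFactors hp)))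
    have hpd := Nat.primeFactors_mono (dvd_mul_left c q) hd.ne_zero hp
    exact (mem_insert.mp (hdQ hpd)).resolve_left hpq
  have hsqrt : √((n : ℝ) ^ 2 - 4) = f * √(c : ℝ) * √(q : ℝ) := by
    rw [sqrt_sq_sub_four_eq hnfd, Nat.cast_mul, sqrt_mul (Nat.cast_nonneg q)]
    ring
  refine ⟨n / 2, div_mem (natCast_mem _ n) (ofNat_mem _ 2), f * √(c : ℝ) / 2,
    div_mem (mul_mem (natCast_mem _ f) (sqrt_mem_adjoinSqrt_of_primeFactors_subset hc hcQ))
      (ofNat_mem _ 2), ?_, ?_⟩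
  · rw [lam, hsqrt]
    ring
  · rw [lam_inv hn, hsqrt]
    ring

theorem isQuadConj_lam_rpow {Q : Finset ℕ} {q n f d : ℕ} {ε : ℝ} (hε : ε = 1 ∨ ε = -1)
    (hq : q.Prime) (hn : 2 ≤ n) (hd : Squarefree d) (hdQ : d.primeFactors ⊆ insert q Q)
    (hnfd : (n : ℝ) ^ 2 - 4 = f ^ 2 * d) :
    IsQuadConj (adjoinSqrt Q) √(q : ℝ) (lam n ^ ε)
      (if q ∣ d then (lam n ^ ε)⁻¹ else lam n ^ ε) := by
  split_ifs with hqd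
  · have h := isQuadConj_lam_inv hq hn hd hqd hdQ hnfd
    rcases hε with rfl | rfl
    · simpa using h
    · simpa [rpow_neg_one] using h.symm
  · have hdQ' : d.primeFactors ⊆ Q := fun p hp =>
      (mem_insert.mp (hdQ hp)).resolve_left fun hpq => hqd (hpq ▸ Nat.dvd_of_mem_primeFactors hp)
    have h := lam_mem_adjoinSqrt hd hdQ' hnfd
    refine .of_mem ?_
    rcases hε with rfl | rfl
    · simpa using h
    · simpa [rpow_neg_one] using inv_mem h

theorem sum_filter_eq_zero_of_sum_ite_neg {ι M : Type*} [AddCommGroup M] [IsAddTorsionFree M]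
    {s : Finset ι} {p : ι → Prop} [DecidablePred p] {g : ι → M} (h : ∑ i ∈ s, g i = 0)
    (h' : ∑ i ∈ s, (if p i then -g i else g i) = 0) : ∑ i ∈ s with p i, g i = 0 := by
  rw [sum_ite, sum_neg_distrib] at h'
  rw [← sum_filter_add_sum_filter_not s p, ← neg_add_eq_zero.mp h'] at h
  exact self_eq_neg.mp (eq_neg_of_add_eq_zero_left h)

theorem sum_filter_prime_dvd_sign_mul_log_Nnorm_eq_zero {ι : Type*} [Fintype ι]
    {n f d : ι → ℕ} {sign : ι → ℝ} (hn : ∀ j, 2 ≤ n j) (hsign : ∀ j, sign j = 1 ∨ sign j = -1)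
    (hd : ∀ j, Squarefree (d j)) (hnfd : ∀ j, (n j : ℝ) ^ 2 - 4 = f j ^ 2 * d j)
    (hrel : ∑ j, sign j * log (Nnorm (n j)) = 0) {q : ℕ} (hq : q.Prime) :
    ∑ j with q ∣ d j, sign j * log (Nnorm (n j)) = 0 := by
  classical
  set Q := (univ.biUnion fun j => (d j).primeFactors).erase q
  have hQ : ∀ p ∈ Q, p.Prime := fun p hp => by
    obtain ⟨j, -, hj⟩ := mem_biUnion.mp (mem_of_mem_erase hp)
    exact Nat.prime_of_mem_primeFactors hj
  have hdQ (j) : (d j).primeFactors ⊆ insert q Q :=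
    subset_insert_iff.mpr <| erase_subset_erase q <|
      subset_biUnion_of_mem (fun j => (d j).primeFactors) (mem_univ j)
  set ν := fun j => lam (n j) ^ sign j
  have hν (j) : 0 < ν j := rpow_pos_of_pos (lam_pos (by linarith [hn j])) _
  have hlog (j) : sign j * log (Nnorm (n j)) = 2 * log (ν j) := by
    rw [Nnorm_eq_lam_sq, log_pow, log_rpow (lam_pos (by linarith [hn j]))]
    push_cast
    ring
  simp only [hlog, ← mul_sum] at hrel ⊢
  have hprod : ∏ j, ν j = 1 := by
    refine eq_one_of_pos_of_log_eq_zero (prod_pos fun j _ => hν j) ?_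
    rw [log_prod fun j _ => (hν j).ne']
    linarith
  have hq2 : √(q : ℝ) * √(q : ℝ) ∈ adjoinSqrt Q := by
    rw [mul_self_sqrt (Nat.cast_nonneg q)]
    exact natCast_mem _ q
  have hconj := IsQuadConj.prod hq2 univ
    fun j _ => isQuadConj_lam_rpow (hsign j) hq (hn j) (hd j) (hdQ j) (hnfd j)
  rw [hprod] at hconj
  have hprod' := hconj.unique (sqrt_prime_notMem_adjoinSqrt hQ hq (notMem_erase q _))
    (.of_mem (one_mem _))
  have hsum' : ∑ j, (if q ∣ d j then -log (ν j) else log (ν j)) = 0 := by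
    simp_rw [← log_inv, ← apply_ite log]
    rw [← log_prod fun j _ => by split_ifs <;> simp [(hν j).ne']]
    exact (congrArg log hprod').trans log_one
  rw [sum_filter_eq_zero_of_sum_ite_neg (by linarith) hsum', mul_zero]

/-- **Lemma 2 (`lem:Indep`)**: if `Σ_j sign_j·log N(n_j) = 0` is a non-degenerate relation
(no proper nonempty subsum vanishes), then all the `n_j² − 4` have the same squarefree
kernel: there are an integer `d` and positive integers `f_j` with `n_j² − 4 = d·f_j²`. -/
theorem nondegenerate_relation_same_field
    (K : ℕ) (n : Fin K → ℕ) (hn : ∀ j, 2 < n j)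
    (sign : Fin K → ℝ) (hsign : ∀ j, sign j = 1 ∨ sign j = -1)
    (hrel : ∑ j, sign j * Real.log (Nnorm (n j)) = 0)
    (hnondeg : ∀ S : Finset (Fin K), S.Nonempty → S ≠ Finset.univ →
      ∑ j ∈ S, sign j * Real.log (Nnorm (n j)) ≠ 0) :
    ∃ d : ℤ, ∃ f : Fin K → ℤ, ∀ j, 0 < f j ∧ (n j : ℤ) ^ 2 - 4 = d * f j ^ 2 := by
  classical
  have h4 (j) : 4 < n j ^ 2 := by nlinarith [hn j]
  choose d f _ hf hdf hd using fun j => Nat.sq_mul_squarefree_of_pos (Nat.sub_pos_of_lt (h4 j))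
  have hnfd (j) : (n j : ℤ) ^ 2 - 4 = d j * f j ^ 2 := by
    have := hdf j
    zify [(h4 j).le] at this
    linarith
  have hnfd_real (j) : (n j : ℝ) ^ 2 - 4 = f j ^ 2 * d j := by
    exact_mod_cast (hnfd j).trans (mul_comm _ _)
  have hconst (j k) : d j = d k := by
    by_contra hjk
    obtain ⟨q, hq, hqjk⟩ : ∃ q, q.Prime ∧ ¬(q ∣ d j ↔ q ∣ d k) := by
      simpa using (Nat.Squarefree.ext_iff (hd j) (hd k)).not.mp hjk
    obtain ⟨i₁, i₂, h₁, h₂⟩ : ∃ i₁ i₂, q ∣ d i₁ ∧ ¬q ∣ d i₂ := by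
      by_cases h : q ∣ d j
      exacts [⟨j, k, h, fun h' => hqjk (iff_of_true h h')⟩, ⟨k, j, by tauto, h⟩]
    refine hnondeg {i | q ∣ d i} ⟨i₁, by simpa⟩ (fun h => by simpa [h₂] using h.ge (mem_univ i₂))
      (sum_filter_prime_dvd_sign_mul_log_Nnorm_eq_zero (fun j => (hn j).le) hsign hd hnfd_real hrel hq)
  rcases K.eq_zero_or_pos with rfl | hK
  · exact ⟨0, 1, fun j => j.elim0⟩
  · exact ⟨d ⟨0, hK⟩, fun j => f j, fun j => ⟨Int.natCast_pos.mpr (hf j), by rw [hnfd, hconst]⟩⟩
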